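/- Let (H₀,H₁,𝒳,ℋ) be a smooth scattering system and β ∈ (0,1). Then H₀ is of high-energy order β if and only if H₁ is of high-energy order β. -/

import Mathlib

set_option linter.unusedSectionVars false
set_option linter.unusedVariables false
set_option maxHeartbeats 1000000

open MeasureTheory Filter Complex Set Topology
open scoped ENNReal NNReal ComplexInnerProductSpace

noncomputable section

variable (H : Type*) [NormedAddCommGroup H] [InnerProductSpace ℂ H] [CompleteSpace H]

/-- Truncation of a Borel function, used to define the unbounded functional calculus
from the bounded one. -/
def trunc (g : ℝ → ℂ) (n : ℕ) : ℝ → ℂ := Set.indicator {t | ‖g t‖ ≤ n} g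

/-- A (possibly unbounded) self-adjoint operator on a complex Hilbert space, packaged
together with its unitary one-parameter group `e^{itH}`, its bounded Borel functional
calculus, its spectral projections, the projection onto the absolutely continuous
subspace, the unbounded Borel functional calculus, the scalar spectral measures and
the resolvent.  The axioms recorded below tie all of these data together. -/
structure SAOp where
  /-- the operator, as a densely defined partial linear map -/
  T : H →ₗ.[ℂ] H
  dense_dom : Dense (T.domain : Set H)
  selfAdjoint : IsSelfAdjoint T
  /-- the unitary group `t ↦ e^{itH}` -/
  U : ℝ → H →L[ℂ] H
  U_zero : U 0 = 1
  U_add : ∀ s t, U (s + t) = (U s).comp (U t)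
  U_isometry : ∀ t x, ‖U t x‖ = ‖x‖
  U_cont : ∀ x, Continuous fun t => U t x
  /-- `H` generates the group: `d/dt e^{itH} x |_{t=0} = i H x` on the domain -/
  U_gen : ∀ x : T.domain, HasDerivAt (fun t => U t (x : H)) (Complex.I • T x) 0
  /-- and the domain is maximal with this property -/
  U_gen_max : ∀ x y : H, HasDerivAt (fun t => U t x) (Complex.I • y) 0 → x ∈ T.domain
  /-- the bounded Borel functional calculus -/
  bcal : (ℝ → ℂ) → H →L[ℂ] H
  bcal_one : bcal (fun _ => 1) = 1
  bcal_add : ∀ g h, bcal (g + h) = bcal g + bcal h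
  bcal_mul : ∀ g h, bcal (g * h) = (bcal g).comp (bcal h)
  bcal_conj : ∀ g x y, ⟪bcal g x, y⟫ = ⟪x, bcal (fun t => (starRingEnd ℂ) (g t)) y⟫
  bcal_norm : ∀ (g : ℝ → ℂ) (M : ℝ), (∀ t, ‖g t‖ ≤ M) → ∀ x, ‖bcal g x‖ ≤ M * ‖x‖
  bcal_exp : ∀ t : ℝ, bcal (fun s => Complex.exp (Complex.I * t * s)) = U t
  /-- dominated convergence, making `bcal` the Borel functional calculus -/
  bcal_conv : ∀ (g : ℕ → ℝ → ℂ) (g' : ℝ → ℂ) (M : ℝ), (∀ n t, ‖g n t‖ ≤ M) →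
    (∀ t, Tendsto (fun n => g n t) atTop (𝓝 (g' t))) →
    ∀ x, Tendsto (fun n => bcal (g n) x) atTop (𝓝 (bcal g' x))
  /-- the spectral projections `E(B)`, `B ⊆ ℝ` Borel -/
  E : Set ℝ → H →L[ℂ] H
  E_def : ∀ B, E B = bcal (Set.indicator B fun _ => 1)
  /-- the orthogonal projection onto the absolutely continuous subspace -/
  Pac : H →L[ℂ] H
  Pac_idem : Pac.comp Pac = Pac
  Pac_symm : ∀ x y, ⟪Pac x, y⟫ = ⟪x, Pac y⟫
  Pac_mem : ∀ x, Pac x = x ↔ ∀ B : Set ℝ, MeasurableSet B → volume B = 0 → E B x = 0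
  /-- the unbounded Borel functional calculus -/
  fcal : (ℝ → ℂ) → H →ₗ.[ℂ] H
  fcal_dom : ∀ g x, x ∈ (fcal g).domain ↔
    ∃ y, Tendsto (fun n => bcal (trunc g n) x) atTop (𝓝 y)
  fcal_spec : ∀ g (x : (fcal g).domain),
    Tendsto (fun n => bcal (trunc g n) (x : H)) atTop (𝓝 (fcal g x))
  /-- the scalar spectral measures `B ↦ ⟨x, E(B) x⟩` -/
  specMeasure : H → Measure ℝ
  specMeasure_def : ∀ x B, MeasurableSet B →
    specMeasure x B = ENNReal.ofReal (⟪x, E B x⟫).re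
  /-- the resolvent `(H-z)⁻¹`, defined (at least) off the real axis -/
  Res : ℂ → H →L[ℂ] H
  Res_mem : ∀ z : ℂ, z.im ≠ 0 → ∀ x, Res z x ∈ T.domain
  Res_spec : ∀ (z : ℂ) (hz : z.im ≠ 0) (x : H),
    T ⟨Res z x, Res_mem z hz x⟩ - z • Res z x = x

variable {H}

/-- `W` is the wave operator `W_±(H₁,H₀)` (for `l = atTop` resp. `atBot`). -/
def IsWaveOp (S1 S0 : SAOp H) (l : Filter ℝ) (W : H →L[ℂ] H) : Prop :=
  ∀ x, Tendsto (fun t => S1.U (-t) (S0.U t (S0.Pac x))) l (𝓝 (W x))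

/-- Completeness of a wave operator: its final space is the absolutely continuous
subspace of `H₁`. -/
def IsCompleteWaveOp (S1 : SAOp H) (W : H →L[ℂ] H) : Prop :=
  Set.range W = {y | S1.Pac y = y}

/-- Boundedness of the composition `B ∘ T` of a bounded operator with a partially
defined (possibly unbounded) operator. -/
def BddComp (B : H →L[ℂ] H) (T : H →ₗ.[ℂ] H) : Prop :=
  ∃ C : ℝ, ∀ x : T.domain, ‖B (T x)‖ ≤ C * ‖(x : H)‖

/-- A real function viewed as complex valued. -/
def cf (f : ℝ → ℝ) : ℝ → ℂ := fun t => (f t : ℂ)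

/-- `(W - P₁^{ac} P₀^{ac}) f(H₀)` is bounded. -/
def FBoundedWith (S1 S0 : SAOp H) (f : ℝ → ℝ) (W : H →L[ℂ] H) : Prop :=
  BddComp (W - S1.Pac.comp S0.Pac) (S0.fcal (cf f))

/-- The pair `(H₁,H₀)` is `f`-bounded: both wave operators `W_±(H₁,H₀)` exist and
`(W_±(H₁,H₀) - P₁^{ac} P₀^{ac}) f(H₀)` is bounded. -/
def FBoundedPair (S1 S0 : SAOp H) (f : ℝ → ℝ) : Prop :=
  ∀ l ∈ ({atTop, atBot} : Set (Filter ℝ)),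
    ∃ W : H →L[ℂ] H, IsWaveOp S1 S0 l W ∧ FBoundedWith S1 S0 f W

/-- Mutual `f`-boundedness `H₁ ∼_f H₀`. -/
def MutuallyFBounded (S1 S0 : SAOp H) (f : ℝ → ℝ) : Prop :=
  FBoundedPair S1 S0 f ∧ FBoundedPair S0 S1 f

/-- The spectrum of (the operator described by) `S`, via its spectral projections. -/
def SAOp.spectrum (S : SAOp H) : Set ℝ :=
  {t | ∀ ε > 0, S.E (Set.Ioo (t - ε) (t + ε)) ≠ 0}

/-- The absolutely continuous spectrum. -/
def SAOp.acSpectrum (S : SAOp H) : Set ℝ :=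
  {t | ∀ ε > 0, (S.E (Set.Ioo (t - ε) (t + ε))).comp S.Pac ≠ 0}

/-- The sum `H + V` of a partially defined operator and a bounded operator. -/
def LinearPMap.addL (T : H →ₗ.[ℂ] H) (V : H →L[ℂ] H) : H →ₗ.[ℂ] H :=
  ⟨T.domain, T.toFun + (V : H →ₗ[ℂ] H).comp T.domain.subtype⟩


/-- The function `f_β(λ) = (1+λ²)^{β/2}`. -/
def fbeta (β : ℝ) : ℝ → ℝ := fun l => (1 + l ^ 2) ^ (β / 2)

/-- `A` is a (positive) trace class operator: `Σ ⟨e_i, A e_i⟩ < ∞` for a Hilbert basis. -/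
def TraceClassOp {K : Type*} [NormedAddCommGroup K] [InnerProductSpace ℂ K]
    [CompleteSpace K] (A : K →L[ℂ] K) : Prop :=
  ∃ (w : Type) (b : HilbertBasis w ℂ K), Summable fun i => (⟪b i, A (b i)⟫).re

variable (H : Type*) [NormedAddCommGroup H] [InnerProductSpace ℂ H] [CompleteSpace H]
variable (X : Type*) [NormedAddCommGroup X] [NormedSpace ℂ X]

/-- A Gelfand triple `𝒳 ⊂ ℋ ⊂ 𝒳*`: a Banach space `𝒳` continuously and densely
embedded into the Hilbert space `ℋ`. -/
structure GelfandTriple where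
  ι : X →L[ℂ] H
  denseRange : DenseRange ι
  inj : Function.Injective ι

variable {H X}

/-- The canonical (linear!) embedding of `ℋ` into the conjugate dual `𝒳*` of `𝒳`,
`h ↦ (x ↦ ⟪ι x, h⟫)`. -/
def GelfandTriple.toConjDual (G : GelfandTriple H X) (h : H) : X →L⋆[ℂ] ℂ :=
  ((innerSL ℂ).flip h).comp G.ι

lemma GelfandTriple.toConjDual_apply (G : GelfandTriple H X) (h : H) (x : X) :
    G.toConjDual h x = ⟪G.ι x, h⟫ := rfl

lemma GelfandTriple.norm_toConjDual_le (G : GelfandTriple H X) (h : H) :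
    ‖G.toConjDual h‖ ≤ ‖G.ι‖ * ‖h‖ := by
  refine ContinuousLinearMap.opNorm_le_bound _ (by positivity) fun x => ?_
  calc ‖G.toConjDual h x‖ ≤ ‖G.ι x‖ * ‖h‖ := norm_inner_le_norm _ _
    _ ≤ ‖G.ι‖ * ‖x‖ * ‖h‖ := by gcongr; exact G.ι.le_opNorm x
    _ = ‖G.ι‖ * ‖h‖ * ‖x‖ := by ring

/-- The operator in `B(𝒳,𝒳*)` induced by a bounded operator on `ℋ`. -/
def GelfandTriple.inducedOp (G : GelfandTriple H X) (A : H →L[ℂ] H) :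
    X →L[ℂ] (X →L⋆[ℂ] ℂ) :=
  LinearMap.mkContinuous
    { toFun := fun y => G.toConjDual (A (G.ι y))
      map_add' := fun y z => by
        ext x
        simp [GelfandTriple.toConjDual_apply, inner_add_right]
      map_smul' := fun c y => by
        ext x
        simp [GelfandTriple.toConjDual_apply, inner_smul_right] }
    (‖G.ι‖ * ‖A‖ * ‖G.ι‖)
    (fun y => by
      calc ‖G.toConjDual (A (G.ι y))‖ ≤ ‖G.ι‖ * ‖A (G.ι y)‖ := G.norm_toConjDual_le _
        _ ≤ ‖G.ι‖ * (‖A‖ * (‖G.ι‖ * ‖y‖)) := by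
            gcongr
            exact (A.le_opNorm _).trans (by gcongr; exact G.ι.le_opNorm y)
        _ = ‖G.ι‖ * ‖A‖ * ‖G.ι‖ * ‖y‖ := by ring)

/-- Local Hölder continuity on a set. -/
def LocallyHolderOn {α E : Type*} [PseudoMetricSpace α] [PseudoMetricSpace E] (F : α → E) (s : Set α) : Prop :=
  ∀ z ∈ s, ∃ t ∈ 𝓝[s] z, ∃ C r : ℝ≥0, 0 < r ∧ r ≤ 1 ∧ HolderOnWith C r F t


variable {H : Type*} [NormedAddCommGroup H] [InnerProductSpace ℂ H] [CompleteSpace H]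
variable {X : Type*} [NormedAddCommGroup X] [NormedSpace ℂ X]

/-- `𝒳`-smoothness data for a self-adjoint operator: an open set `U ⊆ ℝ` of full
Lebesgue measure together with the boundary values `R(λ ± i0)` of the resolvent in
`B(𝒳,𝒳*)`, which extend the resolvent locally Hölder continuously to
`ℍ_± ∪ U`. -/
structure SmoothData (G : GelfandTriple H X) (S : SAOp H) where
  U : Set ℝ
  openU : IsOpen U
  fullU : volume Uᶜ = 0
  Rp : ℝ → X →L[ℂ] (X →L⋆[ℂ] ℂ)
  Rm : ℝ → X →L[ℂ] (X →L⋆[ℂ] ℂ)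
  limP : ∀ l ∈ U, Tendsto (fun ε : ℝ => G.inducedOp (S.Res (l + ε * Complex.I)))
    (𝓝[>] 0) (𝓝 (Rp l))
  limM : ∀ l ∈ U, Tendsto (fun ε : ℝ => G.inducedOp (S.Res (l - ε * Complex.I)))
    (𝓝[>] 0) (𝓝 (Rm l))
  holderP : LocallyHolderOn
    (fun z => if 0 < z.im then G.inducedOp (S.Res z) else Rp z.re)
    ({z : ℂ | 0 < z.im} ∪ (Complex.ofReal '' U))
  holderM : LocallyHolderOn
    (fun z => if z.im < 0 then G.inducedOp (S.Res z) else Rm z.re)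
    ({z : ℂ | z.im < 0} ∪ (Complex.ofReal '' U))

/-- The operator `A(λ) = (2πi)⁻¹ (R(λ+i0) - R(λ-i0)) ∈ B(𝒳,𝒳*)`. -/
def SmoothData.A {G : GelfandTriple H X} {S : SAOp H} (D : SmoothData G S) (l : ℝ) :
    X →L[ℂ] (X →L⋆[ℂ] ℂ) :=
  ((2 * Real.pi * Complex.I)⁻¹) • (D.Rp l - D.Rm l)

/-- An `𝒳`-smooth operator is of high-energy order `β` if
`‖R(λ±i0)‖_{𝒳,𝒳*} ≤ b |λ|^{-β}` for all `λ ∈ U` with `|λ| ≥ λ̂`. -/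
def HighEnergyOrder {G : GelfandTriple H X} {S : SAOp H} (D : SmoothData G S)
    (β : ℝ) : Prop :=
  ∃ lam b : ℝ, 0 < lam ∧ 0 < b ∧ ∀ l ∈ D.U, lam ≤ |l| →
    ‖D.Rp l‖ ≤ b * |l| ^ (-β) ∧ ‖D.Rm l‖ ≤ b * |l| ^ (-β)

/-- `V ∈ Γ₂(𝒳*,𝒳)`: `V` factors through a Hilbert space, `V = V₁* V₀` with
`V₀, V₁ ∈ B(𝒳*,𝒦)`. -/
def IsGamma2 (G : GelfandTriple H X) (Vd : (X →L⋆[ℂ] ℂ) →L[ℂ] X) : Prop :=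
  ∃ (K : Type) (_ : NormedAddCommGroup K) (_ : InnerProductSpace ℂ K)
    (_ : CompleteSpace K) (V0 V1 : (X →L⋆[ℂ] ℂ) →L[ℂ] K),
    ∀ φ ψ : X →L⋆[ℂ] ℂ, ψ (Vd φ) = ⟪V0 φ, V1 ψ⟫

/-- A smooth scattering system `(H₀, H₁, 𝒳, ℋ)`: two `𝒳`-smooth self-adjoint
operators on a common domain whose difference `V = H₁ - H₀` lies in `Γ₂(𝒳*,𝒳)`. -/
structure SmoothScatteringSystem (G : GelfandTriple H X) where
  S0 : SAOp H
  S1 : SAOp H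
  Vop : H →L[ℂ] H
  hsum : S1.T = S0.T.addL Vop
  D0 : SmoothData G S0
  D1 : SmoothData G S1
  sameU : D1.U = D0.U
  Vd : (X →L⋆[ℂ] ℂ) →L[ℂ] X
  hVd : ∀ h : H, G.ι (Vd (G.toConjDual h)) = Vop h
  gamma2 : IsGamma2 G Vd

/-- A smooth scattering system has high-energy order `β` if both its operators do. -/
def SmoothScatteringSystem.HighEnergy {G : GelfandTriple H X}
    (SS : SmoothScatteringSystem G) (β : ℝ) : Prop :=
  HighEnergyOrder SS.D0 β ∧ HighEnergyOrder SS.D1 β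

/-- The extension of the resolvent to the closed upper half plane, using the
boundary values `R(λ+i0)` on the reals. -/
def SmoothData.extP {G : GelfandTriple H X} {S : SAOp H} (D : SmoothData G S) :
    ℂ → (X →L[ℂ] (X →L⋆[ℂ] ℂ)) :=
  fun z => if 0 < z.im then G.inducedOp (S.Res z) else D.Rp z.re

/-- The extension of the resolvent to the closed lower half plane. -/
def SmoothData.extM {G : GelfandTriple H X} {S : SAOp H} (D : SmoothData G S) :
    ℂ → (X →L[ℂ] (X →L⋆[ℂ] ℂ)) :=
  fun z => if z.im < 0 then G.inducedOp (S.Res z) else D.Rm z.re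

/-- A finite-rank operator from `𝒳` to `𝒳*`. -/
def FiniteRankXXd (F : X →L[ℂ] (X →L⋆[ℂ] ℂ)) : Prop :=
  ∃ (n : ℕ) (c : Fin n → (X →L[ℂ] ℂ)) (g : Fin n → (X →L⋆[ℂ] ℂ)),
    ∀ y, F y = ∑ i, (c i y) • g i

/-- Membership in `FA(𝒳,𝒳*)`, the norm closure of the finite-rank operators. -/
def InFA (F : X →L[ℂ] (X →L⋆[ℂ] ℂ)) : Prop :=
  ∀ ε > 0, ∃ F', FiniteRankXXd F' ∧ ‖F - F'‖ ≤ ε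

variable {H : Type*} [NormedAddCommGroup H] [InnerProductSpace ℂ H] [CompleteSpace H]
variable {X : Type*} [NormedAddCommGroup X] [NormedSpace ℂ X]

/-!
The second resolvent identity `R₁(z) = R₀(z) - R₀(z) V R₁(z)` holds in `B(𝒳,𝒳*)` with the
middle factor `V ∈ B(𝒳*,𝒳)`, and passes to the boundary values `R(λ ± i0)`. Hence
`‖R₁(λ±i0)‖ ≤ ‖R₀(λ±i0)‖ (1 + ‖V‖ ‖R₁(λ±i0)‖)`, and once `|λ|` is so large that
`b |λ|^{-β} ‖V‖ ≤ 1/2` this gives `‖R₁(λ±i0)‖ ≤ 2b |λ|^{-β}`. Since `H₀ = H₁ - V`, the roles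
of `H₀` and `H₁` can be exchanged.
-/

theorem Filter.Tendsto.clm_comp {𝕜 ι E F G : Type*} [NontriviallyNormedField 𝕜]
    [SeminormedAddCommGroup E] [NormedSpace 𝕜 E] [SeminormedAddCommGroup F] [NormedSpace 𝕜 F]
    [SeminormedAddCommGroup G] [NormedSpace 𝕜 G] {l : Filter ι}
    {g : ι → F →L[𝕜] G} {f : ι → E →L[𝕜] F} {g₀ : F →L[𝕜] G} {f₀ : E →L[𝕜] F}
    (hg : Tendsto g l (𝓝 g₀)) (hf : Tendsto f l (𝓝 f₀)) :
    Tendsto (fun i => (g i).comp (f i)) l (𝓝 (g₀.comp f₀)) :=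
  (isBoundedBilinearMap_comp.continuous.tendsto (g₀, f₀)).comp (hg.prodMk_nhds hf)

section

variable {E F : Type*} [NormedAddCommGroup E] [NormedSpace ℂ E]
  [NormedAddCommGroup F] [NormedSpace ℂ F]

theorem eq_sub_comp_comp_of_tendsto {ι : Type*} {l : Filter ι} [l.NeBot]
    {f g : ι → E →L[ℂ] F} {A B : E →L[ℂ] F} (W : F →L[ℂ] E)
    (hf : Tendsto f l (𝓝 A)) (hg : Tendsto g l (𝓝 B))
    (h : ∀ᶠ i in l, f i = g i - (g i).comp (W.comp (f i))) :
    A = B - B.comp (W.comp A) :=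
  tendsto_nhds_unique hf <| (hg.sub (hg.clm_comp (tendsto_const_nhds.clm_comp hf))).congr'
    (h.mono fun _ hi => hi.symm)

theorem ContinuousLinearMap.norm_le_two_mul_of_eq_sub_comp {A B : E →L[ℂ] F} {W : F →L[ℂ] E}
    (h : A = B - B.comp (W.comp A)) (hBW : ‖B‖ * ‖W‖ ≤ 1 / 2) : ‖A‖ ≤ 2 * ‖B‖ := by
  have hA : ‖A‖ ≤ ‖B‖ + ‖B‖ * ‖W‖ * ‖A‖ :=
    calc ‖A‖ ≤ ‖B‖ + ‖B.comp (W.comp A)‖ := (congrArg norm h).trans_le (norm_sub_le _ _)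
      _ ≤ ‖B‖ + ‖B‖ * (‖W‖ * ‖A‖) := by
          gcongr
          exact (B.opNorm_comp_le _).trans (by gcongr; exact W.opNorm_comp_le A)
      _ = ‖B‖ + ‖B‖ * ‖W‖ * ‖A‖ := by ring
  linarith [mul_le_mul_of_nonneg_right hBW (norm_nonneg A)]

end

theorem LinearPMap.IsFormalAdjoint.eq_zero_of_apply_eq_smul {E : Type*} [NormedAddCommGroup E]
    [InnerProductSpace ℂ E] {T : E →ₗ.[ℂ] E} (hT : T.IsFormalAdjoint T) {z : ℂ} (hz : z.im ≠ 0)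
    {x : T.domain} (hx : T x = z • (x : E)) : (x : E) = 0 := by
  have h := hT x x
  rw [hx, inner_smul_left, inner_smul_right] at h
  have hz' : (starRingEnd ℂ) z ≠ z := fun hc => hz (Complex.conj_eq_iff_im.mp hc)
  by_contra hx0
  exact hz' (mul_right_cancel₀ (inner_self_ne_zero.mpr hx0) h)

theorem LinearPMap.apply_eq_of_eq_addL {S T : H →ₗ.[ℂ] H} {V : H →L[ℂ] H} (h : S = T.addL V)
    (x : S.domain) : S x = T ⟨x, show (x : H) ∈ (T.addL V).domain from h ▸ x.2⟩ + V x :=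
  (LinearPMap.ext_iff.mp h).2 (hf := x.2) (hg := h ▸ x.2)

theorem LinearPMap.eq_addL_neg_of_eq_addL {S T : H →ₗ.[ℂ] H} {V : H →L[ℂ] H}
    (h : S = T.addL V) : T = S.addL (-V) := by
  refine LinearPMap.ext (by rw [h]; rfl) fun x hT hS => ?_
  have := LinearPMap.apply_eq_of_eq_addL h ⟨x, hS⟩
  change T ⟨x, hT⟩ = S ⟨x, hS⟩ + -V x
  rw [this, add_neg_cancel_right]

namespace SAOp

theorem isFormalAdjoint_self (S : SAOp H) : S.T.IsFormalAdjoint S.T := by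
  have h := LinearPMap.adjoint_isFormalAdjoint S.dense_dom
  rwa [show S.T.adjoint = S.T from S.selfAdjoint] at h

theorem eq_res_of_apply_sub_smul_eq (S : SAOp H) {z : ℂ} (hz : z.im ≠ 0) {w : H}
    {x : S.T.domain} (hx : S.T x - z • (x : H) = w) : (x : H) = S.Res z w := by
  let r : S.T.domain := ⟨S.Res z w, S.Res_mem z hz w⟩
  have hr : S.T r - z • (r : H) = w := S.Res_spec z hz w
  have hxr : S.T (x - r) = z • ((x - r : S.T.domain) : H) := by
    rw [LinearPMap.map_sub, Submodule.coe_sub]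
    linear_combination (norm := module) hx - hr
  exact sub_eq_zero.mp (S.isFormalAdjoint_self.eq_zero_of_apply_eq_smul hz hxr)

theorem res_eq_sub_res_comp {S₀ S₁ : SAOp H} {V : H →L[ℂ] H} (h : S₁.T = S₀.T.addL V)
    {z : ℂ} (hz : z.im ≠ 0) :
    S₁.Res z = S₀.Res z - (S₀.Res z).comp (V.comp (S₁.Res z)) := by
  ext w
  let y : S₁.T.domain := ⟨S₁.Res z w, S₁.Res_mem z hz w⟩
  have hy := S₁.Res_spec z hz w
  rw [LinearPMap.apply_eq_of_eq_addL h] at hy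
  have := S₀.eq_res_of_apply_sub_smul_eq hz (w := w - V y) (by rw [← hy]; abel)
  simpa [map_sub] using this

end SAOp

namespace GelfandTriple

variable (G : GelfandTriple H X)

theorem inducedOp_sub (A B : H →L[ℂ] H) :
    G.inducedOp (A - B) = G.inducedOp A - G.inducedOp B := by
  ext y x
  simp [inducedOp, toConjDual_apply]

theorem inducedOp_comp_comp {V : H →L[ℂ] H} {Vd : (X →L⋆[ℂ] ℂ) →L[ℂ] X}
    (hVd : ∀ h : H, G.ι (Vd (G.toConjDual h)) = V h) (A B : H →L[ℂ] H) :
    G.inducedOp (A.comp (V.comp B)) = (G.inducedOp A).comp (Vd.comp (G.inducedOp B)) := by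
  ext y x
  simp [inducedOp, hVd]

theorem inducedOp_res_eq_sub_comp {S₀ S₁ : SAOp H} {V : H →L[ℂ] H}
    {Vd : (X →L⋆[ℂ] ℂ) →L[ℂ] X} (hVd : ∀ h : H, G.ι (Vd (G.toConjDual h)) = V h)
    (h : S₁.T = S₀.T.addL V) {z : ℂ} (hz : z.im ≠ 0) :
    G.inducedOp (S₁.Res z) =
      G.inducedOp (S₀.Res z) - (G.inducedOp (S₀.Res z)).comp (Vd.comp (G.inducedOp (S₁.Res z))) := by
  conv_lhs => rw [SAOp.res_eq_sub_res_comp h hz]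
  rw [G.inducedOp_sub, G.inducedOp_comp_comp hVd]

end GelfandTriple

section HighEnergy

variable {G : GelfandTriple H X} {S₀ S₁ : SAOp H} {D₀ : SmoothData G S₀} {D₁ : SmoothData G S₁}
  {W : (X →L⋆[ℂ] ℂ) →L[ℂ] X}

variable (D₀ D₁) in
theorem SmoothData.boundaryValues_eq_sub_comp
    (hres : ∀ z : ℂ, z.im ≠ 0 → G.inducedOp (S₁.Res z) =
      G.inducedOp (S₀.Res z) - (G.inducedOp (S₀.Res z)).comp (W.comp (G.inducedOp (S₁.Res z))))
    {l : ℝ} (hl₀ : l ∈ D₀.U) (hl₁ : l ∈ D₁.U) :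
    D₁.Rp l = D₀.Rp l - (D₀.Rp l).comp (W.comp (D₁.Rp l)) ∧
      D₁.Rm l = D₀.Rm l - (D₀.Rm l).comp (W.comp (D₁.Rm l)) := by
  refine ⟨eq_sub_comp_comp_of_tendsto W (D₁.limP l hl₁) (D₀.limP l hl₀) ?_,
    eq_sub_comp_comp_of_tendsto W (D₁.limM l hl₁) (D₀.limM l hl₀) ?_⟩ <;>
  filter_upwards [self_mem_nhdsWithin] with ε (hε : 0 < ε) <;>
  exact hres _ (by simpa using hε.ne')

theorem exists_forall_mul_rpow_neg_le {β : ℝ} (hβ : 0 < β) (c : ℝ) :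
    ∃ N : ℝ, ∀ x ≥ N, c * x ^ (-β) ≤ 1 / 2 := by
  have h : Tendsto (fun x : ℝ => c * x ^ (-β)) atTop (𝓝 0) := by
    simpa using (tendsto_rpow_neg_atTop hβ).const_mul c
  exact eventually_atTop.mp (h.eventually (ge_mem_nhds (by norm_num)))

theorem HighEnergyOrder.of_boundaryValues_eq_sub_comp (hU : D₁.U ⊆ D₀.U)
    (hbv : ∀ l ∈ D₁.U, D₁.Rp l = D₀.Rp l - (D₀.Rp l).comp (W.comp (D₁.Rp l)) ∧
      D₁.Rm l = D₀.Rm l - (D₀.Rm l).comp (W.comp (D₁.Rm l)))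
    {β : ℝ} (hβ : 0 < β) (h₀ : HighEnergyOrder D₀ β) : HighEnergyOrder D₁ β := by
  obtain ⟨lam, b, hlam, hb, hbound⟩ := h₀
  obtain ⟨N, hN⟩ := exists_forall_mul_rpow_neg_le hβ (b * ‖W‖)
  refine ⟨max lam N, 2 * b, lt_max_of_lt_left hlam, by positivity, fun l hl hlN => ?_⟩
  have hsmall : b * |l| ^ (-β) * ‖W‖ ≤ 1 / 2 := by
    linarith [hN |l| (le_of_max_le_right hlN)]
  have hdouble {A B : X →L[ℂ] (X →L⋆[ℂ] ℂ)} (h : A = B - B.comp (W.comp A))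
      (hB : ‖B‖ ≤ b * |l| ^ (-β)) : ‖A‖ ≤ 2 * b * |l| ^ (-β) := by
    have hBW : ‖B‖ * ‖W‖ ≤ 1 / 2 :=
      (mul_le_mul_of_nonneg_right hB (norm_nonneg W)).trans hsmall
    linarith [ContinuousLinearMap.norm_le_two_mul_of_eq_sub_comp h hBW]
  obtain ⟨hP, hM⟩ := hbound l (hU hl) (le_of_max_le_left hlN)
  exact ⟨hdouble (hbv l hl).1 hP, hdouble (hbv l hl).2 hM⟩

theorem HighEnergyOrder.of_eq_addL {V : H →L[ℂ] H}
    (hW : ∀ h : H, G.ι (W (G.toConjDual h)) = V h) (hT : S₁.T = S₀.T.addL V)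
    (hU : D₁.U ⊆ D₀.U) {β : ℝ} (hβ : 0 < β) (h₀ : HighEnergyOrder D₀ β) :
    HighEnergyOrder D₁ β :=
  h₀.of_boundaryValues_eq_sub_comp hU
    (fun _ hl => D₀.boundaryValues_eq_sub_comp D₁
      (fun _ hz => G.inducedOp_res_eq_sub_comp hW hT hz) (hU hl) hl) hβ

end HighEnergy

theorem stmt9_general
    (G : GelfandTriple H X) (SS : SmoothScatteringSystem G)
    (β : ℝ) (hβ : β ∈ Set.Ioo (0:ℝ) 1) :
    HighEnergyOrder SS.D0 β ↔ HighEnergyOrder SS.D1 β := by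
  have hVd_neg : ∀ h : H, G.ι ((-SS.Vd) (G.toConjDual h)) = (-SS.Vop) h := by
    simp [SS.hVd]
  exact ⟨.of_eq_addL SS.hVd SS.hsum SS.sameU.le hβ.1,
    .of_eq_addL hVd_neg (LinearPMap.eq_addL_neg_of_eq_addL SS.hsum) SS.sameU.ge hβ.1⟩

/-- **Statement 9** (Proposition: the high-energy order transfers between the two
operators of a smooth scattering system).  For a smooth scattering system
`(H₀,H₁,𝒳,ℋ)` and `β ∈ (0,1)`, `H₀` is of high-energy order `β` iff `H₁` is. -/
theorem stmt9 [TopologicalSpace.SeparableSpace H]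
    (G : GelfandTriple H X) (SS : SmoothScatteringSystem G)
    (β : ℝ) (hβ : β ∈ Set.Ioo (0:ℝ) 1) :
    HighEnergyOrder SS.D0 β ↔ HighEnergyOrder SS.D1 β :=
  stmt9_general G SS β hβ
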